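/- arXiv:2303.17525 — 10 statements merged into one kernel-verified Lean document; each statement's English description precedes it below -/
import Mathlib

section
/- If the discriminant a^2 + 4b = 0, then for any integer n ≥ 1, F_n = 0 if and only if p divides n, where p is the characteristic of F_q. -/
open Polynomial

noncomputable def genFib {K : Type*} [Field K] (a b : K[X]) : ℕ → K[X]
  | 0 => 0
  | 1 => 1
  | n + 2 => a * genFib a b (n + 1) + b * genFib a b n

noncomputable def fibRank {K : Type*} [Field K] (a b M : K[X]) : ℕ :=
  sInf {n : ℕ | 0 < n ∧ M ∣ genFib a b n}

noncomputable def fibPeriod {K : Type*} [Field K] (a b M : K[X]) : ℕ :=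
  sInf {n : ℕ | 0 < n ∧ M ∣ genFib a b n ∧ M ∣ (genFib a b (n + 1) - 1)}

noncomputable def polyOrd {K : Type*} [Field K] (M g : K[X]) : ℕ :=
  orderOf (Ideal.Quotient.mk (Ideal.span {M}) g)

lemma genFib_even_odd {K : Type*} [Field K] (b : K[X]) (k : ℕ) :
    genFib 0 b (2 * k) = 0 ∧ genFib 0 b (2 * k + 1) = b ^ k := by
  induction k with
  | zero => simp [genFib]
  | succ k ih =>
    have h1 : 2 * (k + 1) = 2 * k + 2 := by ring
    have h2 : 2 * (k + 1) + 1 = (2 * k + 1) + 2 := by ring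
    constructor
    · rw [h1, show genFib (0:K[X]) b (2*k+2) = 0 * genFib 0 b (2*k+1) + b * genFib 0 b (2*k) from rfl, ih.1]
      ring
    · rw [h2, show genFib (0:K[X]) b ((2*k+1)+2) = 0 * genFib 0 b (2*k+2) + b * genFib 0 b (2*k+1) from rfl, ih.2]
      ring

lemma genFib_repeated {K : Type*} [Field K] (r : K[X]) (n : ℕ) :
    genFib (2 * r) (-r ^ 2) n = (n : K[X]) * r ^ (n - 1) := by
  induction n using Nat.twoStepInduction with
  | zero => simp [genFib]
  | one => simp [genFib]
  | more n ih1 ih2 =>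
    rw [show genFib (2*r) (-r^2) (n+2) = (2*r) * genFib (2*r) (-r^2) (n+1) + (-r^2) * genFib (2*r) (-r^2) n from rfl, ih1, ih2]
    rcases n with _ | m
    · simp
    · simp only [Nat.add_sub_cancel]
      push_cast
      ring

theorem stmt2 {K : Type*} [Field K] [Fintype K] (p : ℕ) [CharP K p]
    (a b : K[X]) (hb : b ≠ 0) (hdelta : a ^ 2 + 4 * b = 0)
    (n : ℕ) (hn : 1 ≤ n) :
    genFib a b n = 0 ↔ p ∣ n := by
  have hp : p.Prime := CharP.char_is_prime K p
  by_cases h2 : p = 2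
  · subst h2
    have h4 : (4 : K[X]) = 0 := by
      have : ((4:ℕ) : K[X]) = 0 := (CharP.cast_eq_zero_iff K[X] 2 4).2 (by norm_num)
      simpa using this
    have ha2 : a ^ 2 = 0 := by
      have := hdelta
      rw [h4] at this
      simpa using this
    have ha : a = 0 := pow_eq_zero_iff (by norm_num) |>.1 ha2
    subst ha
    rcases Nat.even_or_odd n with ⟨k, hk⟩ | ⟨k, hk⟩
    · subst hk
      constructor
      · intro _; exact ⟨k, by ring⟩
      · intro _
        rw [show k + k = 2 * k by ring, (genFib_even_odd b k).1]
    · subst hk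
      constructor
      · intro h
        rw [(genFib_even_odd b k).2] at h
        exact absurd h (pow_ne_zero _ hb)
      · intro h
        omega
  · have h2K : (2 : K) ≠ 0 := by
      intro h
      have hd : p ∣ 2 := (CharP.cast_eq_zero_iff K p 2).1 (by exact_mod_cast h)
      exact h2 ((Nat.prime_dvd_prime_iff_eq hp Nat.prime_two).1 hd)
    have h4K : (4 : K) ≠ 0 := by
      intro h
      have : (2:K) * 2 = 0 := by rw [← h]; norm_num
      rcases mul_eq_zero.1 this with h' | h' <;> exact h2K h'
    set r : K[X] := C ((2:K)⁻¹) * a with hr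
    have ha : a = 2 * r := by
      rw [hr, show (2 : K[X]) = C (2:K) from (map_ofNat C 2).symm,
        ← mul_assoc, ← C_mul, mul_inv_cancel₀ h2K]
      simp
    have hbr : b = -r ^ 2 := by
      have e1 : r ^ 2 = C ((4:K)⁻¹) * a ^ 2 := by
        rw [hr, mul_pow, ← C_pow]
        congr 1
        rw [inv_pow]
        norm_num
      have e2 : a ^ 2 = -(C (4:K) * b) := by
        rw [show C (4:K) = (4 : K[X]) from map_ofNat C 4]
        linear_combination hdelta
      rw [e1, e2, mul_neg, neg_neg, ← mul_assoc, ← C_mul, inv_mul_cancel₀ h4K, C_1, one_mul]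
    have hrne : r ≠ 0 := by
      intro h
      apply hb
      rw [hbr, h]; ring
    rw [ha, hbr, genFib_repeated]
    constructor
    · intro h
      rcases mul_eq_zero.1 h with h' | h'
      · exact (CharP.cast_eq_zero_iff K[X] p n).1 h'
      · exact absurd h' (pow_ne_zero _ hrne)
    · intro h
      rw [(CharP.cast_eq_zero_iff K[X] p n).2 h, zero_mul]
end

section
/- Assume the discriminant a^2 + 4b ≠ 0. Then F_n = 0 for some positive integer n if and only if a^2/b lies in F_q (viewed as a constant in the rational function field F_q(x)). -/
open Polynomial

noncomputable def GO {K : Type*} [Field K] : ℕ → K[X] × K[X]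
  | 0 => (0, 1)
  | m + 1 => ((GO m).2 + (GO m).1, X * ((GO m).2 + (GO m).1) + (GO m).2)

lemma GO_monic {K : Type*} [Field K] (m : ℕ) :
    ((GO (K := K) m).2).Monic ∧ ((GO (K := K) m).2).degree = m ∧
      ((GO (K := K) (m+1)).1).Monic ∧ ((GO (K := K) (m+1)).1).degree = m := by
  induction m with
  | zero =>
    refine ⟨by simp [GO, monic_one], by simp [GO], ?_, ?_⟩ <;> simp [GO, monic_one]
  | succ m ih =>
    obtain ⟨h1, h2, h3, h4⟩ := ih
    have e1 : (GO (K := K) (m+1)).2 = X * (GO (K := K) (m+1)).1 + (GO (K := K) m).2 := rfl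
    have hdX : (X * (GO (K := K) (m+1)).1).degree = ((m+1 : ℕ) : WithBot ℕ) := by
      rw [degree_mul, degree_X, h4]
      push_cast
      ring
    have hlt : ((GO (K := K) m).2).degree < (X * (GO (K := K) (m+1)).1).degree := by
      rw [hdX, h2]
      exact_mod_cast Nat.lt_succ_self m
    have hO1 : ((GO (K := K) (m+1)).2).Monic := by
      rw [e1]; exact (monic_X.mul h3).add_of_left hlt
    have hO1d : ((GO (K := K) (m+1)).2).degree = ((m+1 : ℕ) : WithBot ℕ) := by
      rw [e1, degree_add_eq_left_of_degree_lt hlt, hdX]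
    have e2 : (GO (K := K) (m+2)).1 = (GO (K := K) (m+1)).2 + (GO (K := K) (m+1)).1 := rfl
    have hlt2 : ((GO (K := K) (m+1)).1).degree < ((GO (K := K) (m+1)).2).degree := by
      rw [hO1d, h4]
      exact_mod_cast Nat.lt_succ_self m
    refine ⟨hO1, hO1d, ?_, ?_⟩
    · rw [e2]; exact hO1.add_of_left hlt2
    · rw [e2, degree_add_eq_left_of_degree_lt hlt2, hO1d]

lemma key_aux {K : Type*} [Field K] (a b : K[X]) (hb : b ≠ 0) (q : K[X]) (hq : q.Monic)
    (h0 : aeval ((algebraMap K[X] (RatFunc K) (a ^ 2)) / (algebraMap K[X] (RatFunc K) b)) q = 0) :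
    ∃ c : K, a ^ 2 = C c * b := by
  set ι := algebraMap K[X] (RatFunc K) with hι
  have hinj : Function.Injective ι := IsFractionRing.injective K[X] (RatFunc K)
  have hbne : ι b ≠ 0 := by
    simpa using fun h => hb (hinj (by simpa using h))
  set u : RatFunc K := ι (a ^ 2) / ι b with hu
  have humul : u * ι b = ι (a ^ 2) := div_mul_cancel₀ _ hbne
  -- u is integral over K, hence over K[X]
  have hintK : IsIntegral K u := ⟨q, hq, by rwa [← aeval_def]⟩
  have hint : IsIntegral K[X] u := hintK.tower_top
  obtain ⟨w, hw⟩ := IsIntegrallyClosed.isIntegral_iff.mp hint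
  have hwb : w * b = a ^ 2 := by
    apply hinj
    rw [map_mul, hw, humul]
  have haw : aeval w q = 0 := by
    apply hinj
    rw [map_zero, ← Polynomial.aeval_algebraMap_apply, hw]
    exact h0
  rcases eq_or_ne q.natDegree 0 with hq0 | hq0
  · -- then q = 1 and aeval w q = 1 ≠ 0 : contradiction
    have : q = 1 := hq.natDegree_eq_zero.mp hq0
    rw [this] at haw
    simp at haw
  · rcases eq_or_ne w.natDegree 0 with hw0 | hw0
    · obtain ⟨c, hc⟩ := Polynomial.natDegree_eq_zero.mp hw0
      exact ⟨c, by rw [← hwb, ← hc]⟩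
    · exfalso
      have hcomp : q.comp w = aeval w q := by
        rw [aeval_def, comp, algebraMap_eq]
      have : (q.comp w).natDegree = q.natDegree * w.natDegree := natDegree_comp
      rw [hcomp, haw] at this
      simp at this
      tauto

lemma fwd_identity {K : Type*} [Field K] (a b : K[X]) (hb : b ≠ 0) (m : ℕ) :
    (algebraMap K[X] (RatFunc K) (genFib a b (2 * m))) * (algebraMap K[X] (RatFunc K) b)
        = (algebraMap K[X] (RatFunc K) a) * (algebraMap K[X] (RatFunc K) b) ^ m *
          aeval ((algebraMap K[X] (RatFunc K) (a ^ 2)) / (algebraMap K[X] (RatFunc K) b)) (GO (K := K) m).1 ∧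
      (algebraMap K[X] (RatFunc K) (genFib a b (2 * m + 1)))
        = (algebraMap K[X] (RatFunc K) b) ^ m *
          aeval ((algebraMap K[X] (RatFunc K) (a ^ 2)) / (algebraMap K[X] (RatFunc K) b)) (GO (K := K) m).2 := by
  set ι := algebraMap K[X] (RatFunc K) with hι
  have hinj : Function.Injective ι := IsFractionRing.injective K[X] (RatFunc K)
  have hbne : ι b ≠ 0 := by
    simpa using fun h => hb (hinj (by simpa using h))
  set u : RatFunc K := ι (a ^ 2) / ι b with hu
  have humul : u * ι b = ι (a ^ 2) := div_mul_cancel₀ _ hbne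
  induction m with
  | zero => simp [genFib, GO]
  | succ m ih =>
    obtain ⟨ih1, ih2⟩ := ih
    have eG : (GO (K := K) (m+1)).1 = (GO (K := K) m).2 + (GO (K := K) m).1 := rfl
    have eO : (GO (K := K) (m+1)).2 = X * (GO (K := K) (m+1)).1 + (GO (K := K) m).2 := rfl
    have hrec2 : genFib a b (2 * (m + 1)) = a * genFib a b (2 * m + 1) + b * genFib a b (2 * m) := by
      have : 2 * (m + 1) = (2 * m) + 2 := by ring
      rw [this]; rfl
    have hrec3 : genFib a b (2 * (m + 1) + 1)
        = a * genFib a b (2 * (m + 1)) + b * genFib a b (2 * m + 1) := by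
      have e : genFib a b (2*m+1+2) = a * genFib a b (2*m+1+1) + b * genFib a b (2*m+1) := rfl
      have e2 : 2*(m+1)+1 = 2*m+1+2 := by ring
      have e3 : 2*(m+1) = 2*m+1+1 := by ring
      rw [e2, e3, e]
    have h1 : ι (genFib a b (2 * (m+1))) * ι b
        = ι a * ι b ^ (m+1) * aeval u (GO (K := K) (m+1)).1 := by
      rw [hrec2, eG, map_add, map_add, map_mul, map_mul]
      rw [ih2]
      calc (ι a * (ι b ^ m * aeval u (GO (K:=K) m).2) + ι b * ι (genFib a b (2*m))) * ι b
          = ι a * ι b ^ (m+1) * aeval u (GO (K:=K) m).2 + ι b * (ι (genFib a b (2*m)) * ι b) := by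
            push_cast [hι]; ring
        _ = ι a * ι b ^ (m+1) * aeval u (GO (K:=K) m).2
              + ι b * (ι a * ι b ^ m * aeval u (GO (K:=K) m).1) := by rw [ih1]
        _ = ι a * ι b ^ (m+1) * (aeval u (GO (K:=K) m).2 + aeval u (GO (K:=K) m).1) := by ring
    have h2 : ι (genFib a b (2 * (m+1) + 1))
        = ι b ^ (m+1) * aeval u (GO (K := K) (m+1)).2 := by
      have hcancel : ι (genFib a b (2 * (m+1) + 1)) * ι b
          = (ι b ^ (m+1) * aeval u (GO (K := K) (m+1)).2) * ι b := by
        rw [hrec3, map_add, map_mul, map_mul, eO, map_add, map_mul, aeval_X]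
        calc (ι a * ι (genFib a b (2*(m+1))) + ι b * ι (genFib a b (2*m+1))) * ι b
            = ι a * (ι (genFib a b (2*(m+1))) * ι b) + ι b * ι b * ι (genFib a b (2*m+1)) := by ring
          _ = ι a * (ι a * ι b ^ (m+1) * aeval u (GO (K:=K) (m+1)).1)
                + ι b * ι b * (ι b ^ m * aeval u (GO (K:=K) m).2) := by rw [h1, ih2]
          _ = (ι a * ι a) * ι b ^ (m+1) * aeval u (GO (K:=K) (m+1)).1
                + ι b ^ (m+2) * aeval u (GO (K:=K) m).2 := by ring
          _ = (u * ι b) * ι b ^ (m+1) * aeval u (GO (K:=K) (m+1)).1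
                + ι b ^ (m+2) * aeval u (GO (K:=K) m).2 := by
                  rw [humul]; push_cast [hι]; ring_nf
          _ = (ι b ^ (m+1) * (u * aeval u (GO (K:=K) (m+1)).1 + aeval u (GO (K:=K) m).2)) * ι b := by
                  ring
      exact mul_right_cancel₀ hbne hcancel
    exact ⟨h1, h2⟩

noncomputable def stepGO {K : Type*} [Field K] (c : K) : K × K → K × K :=
  fun p => (p.2 + p.1, c * (p.2 + p.1) + p.2)

lemma stepGO_injective {K : Type*} [Field K] (c : K) : Function.Injective (stepGO c) := by
  rintro ⟨g1, o1⟩ ⟨g2, o2⟩ h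
  simp only [stepGO, Prod.mk.injEq] at h
  obtain ⟨h1, h2⟩ := h
  rw [h1] at h2
  have ho : o1 = o2 := by linear_combination h2
  have hg : g1 = g2 := by linear_combination h1 - ho
  simp [ho, hg]

lemma bwd_identity {K : Type*} [Field K] (a b : K[X]) (hb : b ≠ 0) (c : K)
    (hc : a ^ 2 = C c * b) (m : ℕ) :
    b * genFib a b (2 * m) = a * b ^ m * C (((stepGO c)^[m] ((0 : K), (1 : K))).1) ∧
      genFib a b (2 * m + 1) = b ^ m * C (((stepGO c)^[m] ((0 : K), (1 : K))).2) := by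
  induction m with
  | zero => simp [genFib]
  | succ m ih =>
    obtain ⟨ih1, ih2⟩ := ih
    set p := (stepGO c)^[m] ((0 : K), (1 : K)) with hp
    have hit : (stepGO c)^[m + 1] ((0 : K), (1 : K)) = (p.2 + p.1, c * (p.2 + p.1) + p.2) := by
      rw [Function.iterate_succ_apply', ← hp]; rfl
    have hrec2 : genFib a b (2 * (m + 1)) = a * genFib a b (2 * m + 1) + b * genFib a b (2 * m) := by
      have e2 : 2 * (m + 1) = 2 * m + 2 := by ring
      rw [e2]; rfl
    have hrec3 : genFib a b (2 * (m + 1) + 1)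
        = a * genFib a b (2 * (m + 1)) + b * genFib a b (2 * m + 1) := by
      have e : genFib a b (2*m+1+2) = a * genFib a b (2*m+1+1) + b * genFib a b (2*m+1) := rfl
      have e2 : 2*(m+1)+1 = 2*m+1+2 := by ring
      have e3 : 2*(m+1) = 2*m+1+1 := by ring
      rw [e2, e3, e]
    have h1 : b * genFib a b (2 * (m + 1))
        = a * b ^ (m + 1) * C ((p.2 + p.1)) := by
      rw [hrec2, mul_add, mul_comm b (a * genFib a b (2*m+1)), mul_assoc, ih2]
      calc a * (b ^ m * C p.2 * b) + b * (b * genFib a b (2*m))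
          = a * (b ^ m * C p.2 * b) + b * (a * b ^ m * C p.1) := by rw [ih1]
        _ = a * b ^ (m+1) * C (p.2 + p.1) := by rw [map_add]; ring
    have h2 : genFib a b (2 * (m + 1) + 1) = b ^ (m + 1) * C (c * (p.2 + p.1) + p.2) := by
      apply mul_left_cancel₀ hb
      rw [hrec3, mul_add, ← mul_assoc, mul_comm b a, mul_assoc, h1]
      calc a * (a * b ^ (m+1) * C (p.2 + p.1)) + b * (b * genFib a b (2*m+1))
          = a ^ 2 * b ^ (m+1) * C (p.2 + p.1) + b * (b * (b ^ m * C p.2)) := by rw [ih2]; ring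
        _ = C c * b * b ^ (m+1) * C (p.2 + p.1) + b ^ (m+2) * C p.2 := by rw [hc]; ring
        _ = b * (b ^ (m+1) * C (c * (p.2 + p.1) + p.2)) := by
            simp only [C_add, C_mul]; ring
    rw [hit]
    exact ⟨h1, h2⟩

theorem stmt3 {K : Type*} [Field K] [Fintype K] (a b : K[X]) (hb : b ≠ 0)
    (hdelta : a ^ 2 + 4 * b ≠ 0) :
    (∃ n : ℕ, 0 < n ∧ genFib a b n = 0) ↔ ∃ c : K, a ^ 2 = C c * b := by
  constructor
  · rintro ⟨n, hn, h0⟩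
    set ι := algebraMap K[X] (RatFunc K) with hι
    have hinj : Function.Injective ι := IsFractionRing.injective K[X] (RatFunc K)
    have hbne : ι b ≠ 0 := by
      simpa using fun h => hb (hinj (by simpa using h))
    rcases Nat.even_or_odd n with ⟨m, hm⟩ | ⟨m, hm⟩
    · -- n = 2*m
      have hm' : n = 2 * m := by omega
      have hmpos : 0 < m := by omega
      have hid := (fwd_identity a b hb m).1
      rw [← hm', h0, map_zero, zero_mul] at hid
      rcases mul_eq_zero.mp hid.symm with h | h
      · rcases mul_eq_zero.mp h with h' | h'
        · -- a = 0
          have ha : a = 0 := by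
            simpa using h'
          exact ⟨0, by simp [ha, pow_two]⟩
        · exact absurd h' (pow_ne_zero m hbne)
      · obtain ⟨m', rfl⟩ : ∃ m', m = m' + 1 := ⟨m - 1, by omega⟩
        exact key_aux a b hb _ (GO_monic m').2.2.1 h
    · -- n = 2*m+1
      have hid := (fwd_identity a b hb m).2
      rw [← hm, h0, map_zero] at hid
      rcases mul_eq_zero.mp hid.symm with h | h
      · exact absurd h (pow_ne_zero m hbne)
      · exact key_aux a b hb _ (GO_monic m).1 h
  · rintro ⟨c, hc⟩
    obtain ⟨i, j, hij, hfe⟩ :=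
      Finite.exists_ne_map_eq_of_infinite (fun m : ℕ => (stepGO c)^[m] ((0 : K), (1 : K)))
    wlog hlt : i < j generalizing i j
    · exact this j i hij.symm hfe.symm (by omega)
    have hiter : (stepGO c)^[i] ((stepGO c)^[j - i] ((0 : K), (1 : K)))
        = (stepGO c)^[i] ((0 : K), (1 : K)) := by
      rw [← Function.iterate_add_apply]
      have : i + (j - i) = j := by omega
      rw [this, hfe]
    have hfix : (stepGO c)^[j - i] ((0 : K), (1 : K)) = ((0 : K), (1 : K)) :=
      (stepGO_injective c).iterate i hiter
    refine ⟨2 * (j - i), by omega, ?_⟩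
    have := (bwd_identity a b hb c hc (j - i)).1
    rw [hfix] at this
    simp only [map_zero, mul_zero] at this
    exact (mul_eq_zero.mp this).resolve_left hb
end

section
/- There exists a positive integer n with F_n = 0 and F_{n+1} = 1 if and only if both a and b lie in F_q (i.e., both are constant polynomials). -/
open Polynomial

/-! If `F n = 0` and `F (n + 1) = 1` with `n > 0`, then `b * F (n - 1) = 1`, so `b` is a unit,
i.e. a nonzero constant; and once `deg b < 2 deg a`, the leading term of `a * F (k + 1)` dominates
the recurrence, so `deg F (k + 1) = k deg a` and no `F (k + 1)` vanishes. Conversely, for constants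
`a` and `b ≠ 0` the shift `(x, y) ↦ (y, a y + b x)` is a permutation of the finite set `K × K`;
its order `n` returns `(F 0, F 1) = (0, 1)` to itself, i.e. `(F n, F (n + 1)) = (0, 1)`. -/

section
variable {K : Type*} [Field K]

lemma genFib_add_two (a b : K[X]) (n : ℕ) :
    genFib a b (n + 2) = a * genFib a b (n + 1) + b * genFib a b n := by
  rw [genFib]

lemma degree_genFib_succ {a b : K[X]} (hab : b.natDegree < 2 * a.natDegree) :
    ∀ k : ℕ, (genFib a b (k + 1)).degree = (k * a.natDegree : ℕ)
  | 0 => by simp [genFib]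
  | 1 => by
      have ha : a ≠ 0 := by rintro rfl; simp at hab
      simp [genFib, degree_eq_natDegree ha]
  | k + 2 => by
      have ha : a ≠ 0 := by rintro rfl; simp at hab
      have hlead : (a * genFib a b (k + 2)).degree = ((k + 2) * a.natDegree : ℕ) := by
        rw [degree_mul, degree_genFib_succ hab (k + 1), degree_eq_natDegree ha, ← Nat.cast_add]
        congr 1; ring
      have htail : (b * genFib a b (k + 1)).degree < ((k + 2) * a.natDegree : ℕ) :=
        calc (b * genFib a b (k + 1)).degree
            ≤ b.degree + (genFib a b (k + 1)).degree := degree_mul_le _ _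
          _ ≤ (b.natDegree + k * a.natDegree : ℕ) := by
            rw [degree_genFib_succ hab k, Nat.cast_add]
            exact add_le_add_left degree_le_natDegree _
          _ < ((k + 2) * a.natDegree : ℕ) := by
            exact_mod_cast (by nlinarith : b.natDegree + k * a.natDegree < (k + 2) * a.natDegree)
      rw [genFib_add_two, degree_add_eq_left_of_degree_lt (hlead ▸ htail), hlead]

lemma genFib_succ_ne_zero {a b : K[X]} (hab : b.natDegree < 2 * a.natDegree) (k : ℕ) :
    genFib a b (k + 1) ≠ 0 := by
  rw [← degree_ne_bot, degree_genFib_succ hab k]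
  exact WithBot.coe_ne_bot

def fibShift (a b : K) (hb : b ≠ 0) : Equiv.Perm (K × K) where
  toFun p := (p.2, a * p.2 + b * p.1)
  invFun p := ((p.2 - a * p.1) / b, p.1)
  left_inv p := by ext <;> simp [hb]
  right_inv p := by ext <;> simp [mul_div_cancel₀ _ hb]

lemma genFib_C_C_pair (a b : K) (hb : b ≠ 0) (n : ℕ) :
    (genFib (C a) (C b) n, genFib (C a) (C b) (n + 1)) =
      Prod.map C C ((fibShift a b hb ^ n) (0, 1)) := by
  induction n with
  | zero => simp [genFib]
  | succ n ih =>
    rw [pow_succ', Equiv.Perm.mul_apply]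
    generalize (fibShift a b hb ^ n) (0, 1) = p at ih ⊢
    simp only [Prod.map, Prod.mk.injEq] at ih ⊢
    simp [fibShift, genFib_add_two, ih.1, ih.2]

end

theorem stmt4 {K : Type*} [Field K] [Fintype K] (a b : K[X]) (hb : b ≠ 0) :
    (∃ n : ℕ, 0 < n ∧ genFib a b n = 0 ∧ genFib a b (n + 1) = 1) ↔
      (∃ c : K, a = C c) ∧ (∃ c : K, b = C c) := by
  constructor
  · rintro ⟨n, hn, h0, h1⟩
    obtain ⟨k, rfl⟩ := Nat.exists_eq_succ_of_ne_zero hn.ne'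
    have hb_unit : IsUnit b := by
      rw [genFib_add_two, h0, mul_zero, zero_add] at h1
      exact .of_mul_eq_one _ h1
    have hb_deg : b.natDegree = 0 := natDegree_eq_zero_of_isUnit hb_unit
    refine ⟨?_, ?_⟩
    · by_contra ha
      have ha_deg : 0 < a.natDegree :=
        Nat.pos_of_ne_zero fun h ↦ ha ((natDegree_eq_zero.mp h).imp fun _ h ↦ h.symm)
      exact genFib_succ_ne_zero (by omega) k h0
    · exact (natDegree_eq_zero.mp hb_deg).imp fun _ h ↦ h.symm
  · rintro ⟨⟨a, rfl⟩, ⟨b, rfl⟩⟩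
    have hb : b ≠ 0 := by rintro rfl; simp at hb
    set σ := fibShift a b hb
    refine ⟨orderOf σ, orderOf_pos σ, ?_⟩
    have h := genFib_C_C_pair a b hb (orderOf σ)
    rw [pow_orderOf_eq_one, Equiv.Perm.one_apply] at h
    simpa using h
end

section
/- For every positive integer n, F_{np} = (F_n)^p · F_p, where p is the characteristic of F_q. -/
open Polynomial

/-!
Factor x² - a x - b as (x - t)(x - s) over an algebraic closure of the fraction field of K[X].
Then F_n = ∑_{i<n} t^i s^(n-1-i), and splitting the sum for F_{np} into n blocks of length p
gives F_{(n+1)p} = t^{np} F_p + s^p F_{np}, while F_{n+1} = t^n + s F_n. Induction on n and the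
additivity of the Frobenius, (t^n + s F_n)^p = t^{np} + s^p F_n^p, finish the proof. Working with
the geometric sums rather than (t^n - s^n)/(t - s) makes a repeated root harmless.
-/

open Finset

section GeomSum

variable {R : Type*} [CommRing R] (x y : R)

theorem geom_sum₂_add (m k : ℕ) :
    ∑ i ∈ range (m + k), x ^ i * y ^ (m + k - 1 - i) =
      x ^ m * ∑ i ∈ range k, x ^ i * y ^ (k - 1 - i) +
        y ^ k * ∑ i ∈ range m, x ^ i * y ^ (m - 1 - i) := by
  induction k with
  | zero => simp
  | succ k ih =>
    simp only [← add_assoc, Nat.add_sub_cancel]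
    rw [geom_sum₂_succ_eq, geom_sum₂_succ_eq (n := k), ih]
    ring

theorem geom_sum₂_mul_expChar (p : ℕ) [ExpChar R p] (n : ℕ) :
    ∑ i ∈ range (n * p), x ^ i * y ^ (n * p - 1 - i) =
      (∑ i ∈ range n, x ^ i * y ^ (n - 1 - i)) ^ p *
        ∑ i ∈ range p, x ^ i * y ^ (p - 1 - i) := by
  induction n with
  | zero => simp [zero_pow (expChar_pos R p).ne']
  | succ n ih =>
    rw [add_one_mul, geom_sum₂_add, ih, Nat.add_sub_cancel, geom_sum₂_succ_eq, add_pow_expChar,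
      mul_pow, ← pow_mul]
    ring

end GeomSum

theorem IsAlgClosed.exists_add_eq_and_mul_eq {L : Type*} [Field L] [IsAlgClosed L] (A B : L) :
    ∃ t s : L, t + s = A ∧ t * s = B := by
  obtain ⟨t, ht⟩ := IsAlgClosed.exists_root (X ^ 2 - C A * X + C B)
    (by rw [show (X ^ 2 - C A * X + C B : L[X]).degree = 2 by compute_degree!]; decide)
  refine ⟨t, A - t, by ring, ?_⟩
  simp only [IsRoot, eval_add, eval_sub, eval_mul, eval_pow, eval_C, eval_X] at ht
  linear_combination -ht

theorem map_genFib_eq_geom_sum₂ {K R : Type*} [Field K] [CommRing R] (φ : K[X] →+* R)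
    {a b : K[X]} {t s : R} (hsum : t + s = φ a) (hprod : t * s = -φ b) (n : ℕ) :
    φ (genFib a b n) = ∑ i ∈ range n, t ^ i * s ^ (n - 1 - i) := by
  induction n using Nat.twoStepInduction with
  | zero => simp [genFib]
  | one => simp [genFib]
  | more n ih₀ ih₁ =>
    rw [genFib, map_add, map_mul, map_mul, ih₀, ih₁, ← hsum, show n + 2 - 1 = n + 1 from rfl,
      geom_sum₂_succ_eq (n := n + 1), Nat.add_sub_cancel, geom_sum₂_succ_eq (n := n)]
    linear_combination (∑ i ∈ range n, t ^ i * s ^ (n - 1 - i)) * hprod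

theorem stmt8_general {K : Type*} [Field K] (p : ℕ) [CharP K p]
    (a b : K[X]) (n : ℕ) :
    genFib a b (n * p) = genFib a b n ^ p * genFib a b p := by
  obtain hp | rfl := CharP.char_is_prime_or_zero K p
  · have : Fact p.Prime := ⟨hp⟩
    let L := AlgebraicClosure (FractionRing K[X])
    have hφ : Function.Injective (algebraMap K[X] L) := by
      rw [IsScalarTower.algebraMap_eq K[X] (FractionRing K[X])]
      exact (algebraMap (FractionRing K[X]) L).injective.comp (IsFractionRing.injective _ _)
    have := charP_of_injective_algebraMap hφ p
    obtain ⟨t, s, hsum, hprod⟩ :=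
      IsAlgClosed.exists_add_eq_and_mul_eq (algebraMap K[X] L a) (-algebraMap K[X] L b)
    apply hφ
    simp only [map_mul, map_pow, map_genFib_eq_geom_sum₂ _ hsum hprod]
    exact geom_sum₂_mul_expChar t s p n
  · simp [genFib]

theorem stmt8 {K : Type*} [Field K] [Fintype K] (p : ℕ) [CharP K p]
    (a b : K[X]) (hb : b ≠ 0) (n : ℕ) (hn : 0 < n) :
    genFib a b (n * p) = genFib a b n ^ p * genFib a b p :=
  stmt8_general p a b n
end

section
/- The multiplicative order of −b modulo M divides the period π(M). In particular, if p is odd and b = 1, then π(M) is even. -/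
/-!
Cassini's identity `F_{n+2} F_n - F_{n+1}^2 = -(-b)^n` shows that at a period `n = m + 1`, where
`F_{m+1} ≡ 0` and `F_{m+2} ≡ 1 (mod M)`, one has `F_m ≡ -(-b)^m`; the recurrence
`F_{m+2} = a F_{m+1} + b F_m` then reads `1 ≡ (-b)^{m+1}`. Hence the order of `-b` divides the
period. When `b = 1` in odd characteristic, `-1 ≠ 1` in the nonzero ring `K[X]/(M)`, so `-b` has
order `2`.
-/

open Polynomial

namespace genFib

variable {K : Type*} [Field K] (a b : K[X])

theorem add_two (n : ℕ) :
    genFib a b (n + 2) = a * genFib a b (n + 1) + b * genFib a b n := rfl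

theorem cassini (n : ℕ) :
    genFib a b (n + 2) * genFib a b n - genFib a b (n + 1) ^ 2 = -(-b) ^ n := by
  induction n with
  | zero => simp [genFib]
  | succ m ih =>
    rw [show m + 1 + 2 = m + 3 from rfl, show m + 1 + 1 = m + 2 from rfl]
    linear_combination genFib a b (m + 1) * add_two a b (m + 1) + (-b) * ih
      - genFib a b (m + 2) * add_two a b m

theorem map_neg_pow_eq_one {R : Type*} [CommRing R] (f : K[X] →+* R) {n : ℕ} (hn : 0 < n)
    (hzero : f (genFib a b n) = 0) (hone : f (genFib a b (n + 1)) = 1) :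
    f (-b) ^ n = 1 := by
  obtain ⟨m, rfl⟩ : ∃ m, n = m + 1 := ⟨n - 1, by omega⟩
  have hcassini := congrArg f (cassini a b m)
  have hrec := congrArg f (add_two a b m)
  simp only [map_sub, map_mul, map_pow, map_neg, map_add] at hcassini hrec hzero hone ⊢
  rw [hzero, hone] at hcassini hrec
  linear_combination -hrec - f b * hcassini

end genFib

theorem polyOrd_dvd_fibPeriod {K : Type*} [Field K] (a b M : K[X]) :
    polyOrd M (-b) ∣ fibPeriod a b M := by
  rcases Set.eq_empty_or_nonempty
      {n : ℕ | 0 < n ∧ M ∣ genFib a b n ∧ M ∣ (genFib a b (n + 1) - 1)} with h | h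
  · rw [fibPeriod, h, Nat.sInf_empty]
    exact dvd_zero _
  · obtain ⟨hpos, hzero, hone⟩ := Nat.sInf_mem h
    refine orderOf_dvd_of_pow_eq_one (genFib.map_neg_pow_eq_one a b _ hpos ?_ ?_)
    · exact (Ideal.Quotient.eq_zero_iff_dvd _ _).mpr hzero
    · rw [← sub_eq_zero, ← map_one (Ideal.Quotient.mk _), ← map_sub]
      exact (Ideal.Quotient.eq_zero_iff_dvd _ _).mpr hone

theorem polyOrd_neg_one {K : Type*} [Field K] {M : K[X]} (hM : 0 < M.natDegree)
    (hK : ringChar K ≠ 2) : polyOrd M (-1) = 2 := by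
  have : Nontrivial (K[X] ⧸ Ideal.span {M}) :=
    Ideal.Quotient.nontrivial_iff.mpr fun h ↦
      hM.ne' (natDegree_eq_zero_of_isUnit (Ideal.span_singleton_eq_top.mp h))
  have : ringChar (K[X] ⧸ Ideal.span {M}) = ringChar K :=
    ringChar.eq_iff.mpr (charP_of_injective_algebraMap (algebraMap K _).injective _)
  simp [polyOrd, this, hK]

theorem stmt13_general {K : Type*} [Field K] (p : ℕ) [CharP K p]
    (a b : K[X])
    (M : K[X]) (hM : 0 < M.natDegree) :
    polyOrd M (-b) ∣ fibPeriod a b M ∧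
      (Odd p → b = 1 → 2 ∣ fibPeriod a b M) := by
  refine ⟨polyOrd_dvd_fibPeriod a b M, fun hp hb ↦ ?_⟩
  subst hb
  have hK : ringChar K ≠ 2 := by
    rw [ringChar.eq K p]
    rintro rfl
    exact Nat.not_odd_iff_even.mpr even_two hp
  simpa [polyOrd_neg_one hM hK] using polyOrd_dvd_fibPeriod a 1 M

theorem stmt13 {K : Type*} [Field K] [Fintype K] (p : ℕ) [CharP K p]
    (a b : K[X]) (hb : b ≠ 0)
    (M : K[X]) (hM : 0 < M.natDegree) (hco : IsCoprime b M) :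
    polyOrd M (-b) ∣ fibPeriod a b M ∧
      (Odd p → b = 1 → 2 ∣ fibPeriod a b M) :=
  stmt13_general p a b M hM
end

section
/- If the discriminant Δ = a^2 + 4b equals 0, then for any irreducible P ∈ F_q[x] coprime to b and any integer e ≥ 1, the rank α(P^e) equals p, the characteristic of F_q. -/
open Polynomial

section Aux

variable {K : Type*} [Field K]

lemma genFib_key (a b : K[X]) (hdelta : a ^ 2 + 4 * b = 0) :
    ∀ n : ℕ, (2 : K[X]) ^ n * genFib a b (n + 1) = ((n : K[X]) + 1) * a ^ n := by
  intro n
  induction n using Nat.twoStepInduction with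
  | zero => simp [genFib]
  | one => simp only [genFib]; push_cast; ring
  | more n ih1 ih2 =>
      rw [show n + 2 + 1 = (n + 1) + 2 by ring, genFib_add_two]
      push_cast
      push_cast at ih1 ih2
      linear_combination (2 * a) * ih2 + (4 * b) * ih1 + (((n : K[X]) + 1) * a ^ n) * hdelta

lemma genFib_char_two (b : K[X]) :
    ∀ k : ℕ, genFib (0 : K[X]) b (2 * k) = 0 ∧ genFib (0 : K[X]) b (2 * k + 1) = b ^ k := by
  intro k
  induction k with
  | zero => simp [genFib]
  | succ k ih =>
      constructor
      · rw [show 2 * (k + 1) = 2 * k + 2 by ring, genFib_add_two, ih.1]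
        ring
      · rw [show 2 * (k + 1) + 1 = (2 * k + 1) + 2 by ring, genFib_add_two, ih.2]
        ring

end Aux

theorem stmt15 {K : Type*} [Field K] [Fintype K] (p : ℕ) [CharP K p]
    (a b : K[X]) (hb : b ≠ 0) (hdelta : a ^ 2 + 4 * b = 0)
    (P : K[X]) (hP : Irreducible P) (hco : IsCoprime b P)
    (e : ℕ) (he : 1 ≤ e) :
    fibRank a b (P ^ e) = p := by
  have hp : p.Prime := CharP.char_is_prime K p
  have hMnu : ¬ IsUnit (P ^ e) := fun h =>
    hP.not_isUnit (isUnit_of_dvd_unit (dvd_pow_self P (by omega)) h)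
  have hcoM : IsCoprime b (P ^ e) := hco.pow_right
  -- key iff
  have hiff : ∀ n : ℕ, P ^ e ∣ genFib a b n ↔ p ∣ n := by
    by_cases hp2 : p = 2
    · -- characteristic 2 case
      subst hp2
      have h2 : (2 : K[X]) = 0 := by
        have h := CharP.cast_eq_zero K 2
        have h' : ((2 : ℕ) : K[X]) = 0 := by
          rw [← Polynomial.C_eq_natCast, h, map_zero]
        exact_mod_cast h'
      have ha : a = 0 := by
        have ha2 : a ^ 2 = 0 := by
          have h4 : (4 : K[X]) = 2 * 2 := by norm_num
          rw [← hdelta, h4, h2]; ring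
        exact pow_eq_zero_iff (n := 2) (by norm_num) |>.mp ha2
      subst ha
      intro n
      rcases Nat.even_or_odd n with ⟨k, hk⟩ | ⟨k, hk⟩
      · subst hk
        constructor
        · intro _; omega
        · intro _
          rw [show k + k = 2 * k by ring, (genFib_char_two b k).1]
          exact dvd_zero _
      · subst hk
        constructor
        · intro h
          rw [(genFib_char_two b k).2] at h
          exact absurd ((hcoM.pow_left (m := k)).isUnit_of_dvd' h dvd_rfl) hMnu
        · intro h; omega
    · -- odd characteristic
      have h2K : (2 : K) ≠ 0 := by
        have hnd : ¬ (p ∣ 2) := fun h => hp2 ((Nat.prime_dvd_prime_iff_eq hp Nat.prime_two).mp h)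
        have h2 : ((2 : ℕ) : K) ≠ 0 := fun h => hnd ((CharP.cast_eq_zero_iff K p 2).mp h)
        simpa using h2
      have h2u : IsUnit (2 : K[X]) := by
        have hC : (2 : K[X]) = C (2 : K) := by
          rw [show (2 : K) = ((2 : ℕ) : K) by norm_num, Polynomial.C_eq_natCast]
          norm_num
        rw [hC]
        exact Polynomial.isUnit_C.mpr (isUnit_iff_ne_zero.mpr h2K)
      have h4u : IsUnit (4 : K[X]) := by
        have h4 : (4 : K[X]) = 2 * 2 := by norm_num
        rw [h4]; exact h2u.mul h2u
      have ha : a ≠ 0 := by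
        intro h
        apply hb
        have h4b : (4 : K[X]) * b = 0 := by rw [← hdelta, h]; ring
        rcases mul_eq_zero.mp h4b with h' | h'
        · exact absurd h' h4u.ne_zero
        · exact h'
      have hPa : ¬ P ∣ a := by
        intro h
        have h1 : P ∣ (4 : K[X]) * b := by
          have h4b : (4 : K[X]) * b = -(a ^ 2) := by linear_combination hdelta
          rw [h4b]
          exact ((h.mul_right a).neg_right).trans (by rw [← pow_two])
        rcases hP.prime.dvd_mul.mp h1 with h' | h'
        · exact hP.not_isUnit (isUnit_of_dvd_unit h' h4u)
        · exact hP.not_isUnit (hco.isUnit_of_dvd' h' dvd_rfl)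
      have hcoa : IsCoprime P a := hP.coprime_iff_not_dvd.mpr hPa
      intro n
      match n with
      | 0 => simp [genFib]
      | m + 1 =>
        have key := genFib_key a b hdelta m
        have h1 : P ^ e ∣ genFib a b (m + 1) ↔ P ^ e ∣ ((m : K[X]) + 1) * a ^ m := by
          rw [← key, IsUnit.dvd_mul_left (h2u.pow m)]
        have h2' : P ^ e ∣ ((m : K[X]) + 1) * a ^ m ↔ P ^ e ∣ ((m : K[X]) + 1) := by
          constructor
          · intro h
            exact (hcoa.pow : IsCoprime (P ^ e) (a ^ m)).dvd_of_dvd_mul_right h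
          · intro h; exact h.mul_right _
        rw [h1, h2']
        have hcast : ((m : K[X]) + 1) = C (((m + 1 : ℕ)) : K) := by
          rw [Polynomial.C_eq_natCast]
          push_cast
          ring
        constructor
        · intro h
          by_contra hnd
          have hne : (((m + 1 : ℕ) : K)) ≠ 0 := fun h0 =>
            hnd ((CharP.cast_eq_zero_iff K p (m + 1)).mp h0)
          have hu : IsUnit ((m : K[X]) + 1) := by
            rw [hcast]
            exact Polynomial.isUnit_C.mpr (isUnit_iff_ne_zero.mpr hne)
          exact hMnu (isUnit_of_dvd_unit h hu)
        · intro h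
          have h0 : ((m : K[X]) + 1) = 0 := by
            have h0' : (((m + 1 : ℕ)) : K[X]) = 0 := (CharP.cast_eq_zero_iff K[X] p (m + 1)).mpr h
            push_cast at h0'
            exact h0'
          rw [h0]
          exact dvd_zero _
  -- conclude
  have hmem : p ∈ {n : ℕ | 0 < n ∧ P ^ e ∣ genFib a b n} := ⟨hp.pos, (hiff p).mpr dvd_rfl⟩
  unfold fibRank
  apply le_antisymm (Nat.sInf_le hmem)
  obtain ⟨hpos, hdvd⟩ := Nat.sInf_mem (⟨p, hmem⟩ : Set.Nonempty _)
  exact Nat.le_of_dvd hpos ((hiff _).mp hdvd)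
end

section
/- Let p be odd and P ∈ F_q[x] irreducible with gcd(b,P)=1 and deg(P)=d. If Δ = a^2+4b is a non-zero quadratic residue modulo P, then α(P) divides q^d − 1 and π(P) divides q^d − 1. -/
/-!
In the field `L = K[X]/(P)`, which has `q ^ d` elements, `Δ = a² + 4b` is the square of some
`G ≠ 0` and `2` is invertible, so `t² - a t - b` has distinct roots `r, s` with `r s = -b ≠ 0`.
Binet's formula `(r - s) F_n = r ^ n - s ^ n` shows that `P ∣ F_n` iff `(r / s) ^ n = 1`, and that
`P ∣ F_n`, `P ∣ F_{n+1} - 1` iff `r ^ n = s ^ n = 1`. Hence `α(P) = ord (r / s)` and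
`π(P) = lcm (ord r) (ord s)`, both of which divide `q ^ d - 1 = #Lˣ`.
-/

open Polynomial

-- Holds for `m = 0` too, the set being empty and `sInf ∅ = 0`.
theorem Nat.sInf_setOf_pos_dvd (m : ℕ) : sInf {n : ℕ | 0 < n ∧ m ∣ n} = m := by
  rcases m.eq_zero_or_pos with rfl | hm
  · simp [Nat.pos_iff_ne_zero]
  · have hmem : m ∈ {n : ℕ | 0 < n ∧ m ∣ n} := ⟨hm, dvd_rfl⟩
    obtain ⟨hpos, hdvd⟩ := Nat.sInf_mem ⟨m, hmem⟩
    exact le_antisymm (Nat.sInf_le hmem) (Nat.le_of_dvd hpos hdvd)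

theorem FiniteField.orderOf_dvd_natCard_sub_one {L : Type*} [Field L] [Finite L] {x : L}
    (hx : x ≠ 0) : orderOf x ∣ Nat.card L - 1 := by
  have := Fintype.ofFinite L
  rw [Nat.card_eq_fintype_card]
  exact orderOf_dvd_of_pow_eq_one (FiniteField.pow_card_sub_one_eq_one x hx)

section Binet

variable {K L : Type*} [Field K] (a b : K[X])

theorem genFib_binet [CommRing L] (φ : K[X] →+* L) {r s : L} (hsum : r + s = φ a)
    (hmul : r * s = -φ b) (n : ℕ) : (r - s) * φ (genFib a b n) = r ^ n - s ^ n := by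
  induction n using Nat.twoStepInduction with
  | zero => simp [genFib]
  | one => simp [genFib]
  | more n ih₁ ih₂ =>
    rw [genFib, map_add, map_mul, map_mul, ← hsum, neg_eq_iff_eq_neg.mp hmul.symm]
    linear_combination (r + s) * ih₂ - r * s * ih₁

variable [Field L] (φ : K[X] →+* L) {r s : L} (hsum : r + s = φ a) (hmul : r * s = -φ b)
  (hrs : r ≠ s)
include hsum hmul hrs

theorem map_genFib_eq_zero_iff (n : ℕ) : φ (genFib a b n) = 0 ↔ r ^ n = s ^ n := by
  rw [← mul_right_inj' (sub_ne_zero.mpr hrs), genFib_binet a b φ hsum hmul, mul_zero,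
    sub_eq_zero]

theorem map_genFib_eq_zero_and_succ_eq_one_iff (n : ℕ) :
    φ (genFib a b n) = 0 ∧ φ (genFib a b (n + 1)) = 1 ↔ r ^ n = 1 ∧ s ^ n = 1 := by
  have hrs' : r - s ≠ 0 := sub_ne_zero.mpr hrs
  rw [map_genFib_eq_zero_iff a b φ hsum hmul hrs, ← mul_right_inj' hrs' (b := φ _),
    genFib_binet a b φ hsum hmul, mul_one]
  constructor
  · rintro ⟨hn, hn₁⟩
    have hr : r ^ n = 1 := by
      refine (mul_left_inj' hrs').mp ?_
      linear_combination hn₁ - s * hn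
    exact ⟨hr, hn ▸ hr⟩
  · rintro ⟨hr, hs⟩
    refine ⟨hr.trans hs.symm, ?_⟩
    linear_combination r * hr - s * hs

end Binet

theorem exists_add_mul_sub_eq_of_sq_eq {L : Type*} [Field L] (h2 : (2 : L) ≠ 0) {A B G : L}
    (hG : G ^ 2 = A ^ 2 + 4 * B) : ∃ r s : L, r + s = A ∧ r * s = -B ∧ r - s = G :=
  ⟨(A + G) / 2, (A - G) / 2, by field_simp; ring, by field_simp; linear_combination -hG,
    by field_simp; ring⟩

section AdjoinRoot

variable {K : Type*} [Field K] {a b P : K[X]} [Fact (Irreducible P)]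

theorem AdjoinRoot.orderOf_dvd_card_pow_natDegree_sub_one [Fintype K] {x : AdjoinRoot P}
    (hx : x ≠ 0) : orderOf x ∣ Fintype.card K ^ P.natDegree - 1 := by
  let pb := AdjoinRoot.powerBasis (Fact.out : Irreducible P).ne_zero
  have := pb.finite
  have := Module.finite_of_finite K (M := AdjoinRoot P)
  have hcard : Nat.card (AdjoinRoot P) = Fintype.card K ^ P.natDegree := by
    rw [Module.natCard_eq_pow_finrank (K := K), Nat.card_eq_fintype_card, pb.finrank,
      AdjoinRoot.powerBasis_dim]
  exact hcard ▸ FiniteField.orderOf_dvd_natCard_sub_one hx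

variable {r s : AdjoinRoot P} (hsum : r + s = AdjoinRoot.mk P a)
  (hmul : r * s = -AdjoinRoot.mk P b) (hrs : r ≠ s)
include hsum hmul hrs

theorem fibRank_eq_orderOf_div (hs : s ≠ 0) : fibRank a b P = orderOf (r / s) := by
  rw [fibRank, ← Nat.sInf_setOf_pos_dvd (orderOf (r / s))]
  congr! 4 with n
  rw [orderOf_dvd_iff_pow_eq_one, div_pow, div_eq_one_iff_eq (pow_ne_zero n hs),
    ← map_genFib_eq_zero_iff a b _ hsum hmul hrs, AdjoinRoot.mk_eq_zero]

theorem fibPeriod_eq_lcm_orderOf : fibPeriod a b P = Nat.lcm (orderOf r) (orderOf s) := by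
  rw [fibPeriod, ← Nat.sInf_setOf_pos_dvd (Nat.lcm _ _)]
  congr! 4 with n
  rw [Nat.lcm_dvd_iff, orderOf_dvd_iff_pow_eq_one, orderOf_dvd_iff_pow_eq_one,
    ← map_genFib_eq_zero_and_succ_eq_one_iff a b _ hsum hmul hrs, ← AdjoinRoot.mk_eq_zero,
    ← AdjoinRoot.mk_eq_zero, map_sub, map_one, sub_eq_zero]

end AdjoinRoot

theorem stmt16_general {K : Type*} [Field K] [Fintype K] (p : ℕ) [CharP K p] (hp : Odd p)
    (a b : K[X])
    (P : K[X]) (hP : Irreducible P) (hco : IsCoprime b P)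
    (hnz : ¬ P ∣ (a ^ 2 + 4 * b))
    (hqr : ∃ g : K[X], P ∣ (g ^ 2 - (a ^ 2 + 4 * b))) :
    fibRank a b P ∣ Fintype.card K ^ P.natDegree - 1 ∧
    fibPeriod a b P ∣ Fintype.card K ^ P.natDegree - 1 := by
  obtain ⟨g, hg⟩ := hqr
  have : Fact (Irreducible P) := ⟨hP⟩
  set φ := AdjoinRoot.mk P
  have h2 : (2 : AdjoinRoot P) ≠ 0 := by
    have h2K : (2 : K) ≠ 0 := Ring.two_ne_zero (ringChar.eq K p ▸ hp.ne_two_of_dvd_nat dvd_rfl)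
    exact map_ofNat (AdjoinRoot.of P) 2 ▸ (map_ne_zero (AdjoinRoot.of P)).mpr h2K
  have hΔ : φ g ^ 2 = φ a ^ 2 + 4 * φ b := by
    have := AdjoinRoot.mk_eq_zero.mpr hg
    rwa [map_sub, sub_eq_zero, map_add, map_mul, map_pow, map_pow, map_ofNat] at this
  have hg0 : φ g ≠ 0 := fun h ↦ hnz <| AdjoinRoot.mk_eq_zero.mp <| by
    rw [map_add, map_mul, map_pow, map_ofNat, ← hΔ, h, zero_pow two_ne_zero]
  have hb0 : φ b ≠ 0 := fun h ↦
    hP.not_isUnit <| hco.isUnit_of_dvd' (AdjoinRoot.mk_eq_zero.mp h) dvd_rfl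
  obtain ⟨r, s, hsum, hmul, hsub⟩ := exists_add_mul_sub_eq_of_sq_eq h2 hΔ
  have hrs : r ≠ s := sub_ne_zero.mp (hsub ▸ hg0)
  have hr0 : r ≠ 0 := left_ne_zero_of_mul (hmul ▸ neg_ne_zero.mpr hb0)
  have hs0 : s ≠ 0 := right_ne_zero_of_mul (hmul ▸ neg_ne_zero.mpr hb0)
  rw [fibRank_eq_orderOf_div hsum hmul hrs hs0, fibPeriod_eq_lcm_orderOf hsum hmul hrs]
  exact ⟨AdjoinRoot.orderOf_dvd_card_pow_natDegree_sub_one (div_ne_zero hr0 hs0),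
    Nat.lcm_dvd (AdjoinRoot.orderOf_dvd_card_pow_natDegree_sub_one hr0)
      (AdjoinRoot.orderOf_dvd_card_pow_natDegree_sub_one hs0)⟩

theorem stmt16 {K : Type*} [Field K] [Fintype K] (p : ℕ) [CharP K p] (hp : Odd p)
    (a b : K[X]) (hb : b ≠ 0)
    (P : K[X]) (hP : Irreducible P) (hco : IsCoprime b P)
    (hnz : ¬ P ∣ (a ^ 2 + 4 * b))
    (hqr : ∃ g : K[X], P ∣ (g ^ 2 - (a ^ 2 + 4 * b))) :
    fibRank a b P ∣ Fintype.card K ^ P.natDegree - 1 ∧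
    fibPeriod a b P ∣ Fintype.card K ^ P.natDegree - 1 :=
  stmt16_general p hp a b P hP hco hnz hqr
end

section
/- Let p be odd and P ∈ F_q[x] irreducible with gcd(b,P)=1 and deg(P)=d. If Δ = a^2+4b is a quadratic non-residue modulo P, then α(P) divides q^d + 1 and π(P) divides (q^d + 1)·ord_P(−b). -/
open Polynomial

private lemma binet_aux {K : Type*} [Field K] (a b : K[X]) {R : Type*} [CommRing R]
    (ρ : K[X] →+* R) (r s : R) (hr : r ^ 2 = ρ a * r + ρ b) (hs : s ^ 2 = ρ a * s + ρ b) :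
    ∀ n, ρ (genFib a b n) * (r - s) = r ^ n - s ^ n := by
  have key : ∀ n, ρ (genFib a b n) * (r - s) = r ^ n - s ^ n ∧
      ρ (genFib a b (n + 1)) * (r - s) = r ^ (n + 1) - s ^ (n + 1) := by
    intro n
    induction n with
    | zero => constructor <;> simp [genFib]
    | succ k ih =>
      refine ⟨ih.2, ?_⟩
      have h2 : genFib a b (k + 2) = a * genFib a b (k + 1) + b * genFib a b k := by
        simp [genFib]
      have hr2 : r ^ (k + 2) = ρ a * r ^ (k + 1) + ρ b * r ^ k := by
        have h : r ^ (k + 2) = r ^ k * r ^ 2 := by ring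
        rw [h, hr]; ring
      have hs2 : s ^ (k + 2) = ρ a * s ^ (k + 1) + ρ b * s ^ k := by
        have h : s ^ (k + 2) = s ^ k * s ^ 2 := by ring
        rw [h, hs]; ring
      rw [h2, map_add, map_mul, map_mul, hr2, hs2]
      linear_combination (ρ a) * ih.2 + (ρ b) * ih.1
  exact fun n => (key n).1

private lemma sInf_eq_of_set {e : ℕ} (he : 0 < e) : sInf {n : ℕ | 0 < n ∧ e ∣ n} = e := by
  have heS : e ∈ {n : ℕ | 0 < n ∧ e ∣ n} := ⟨he, dvd_rfl⟩
  have h2 := Nat.sInf_mem (Set.nonempty_of_mem heS)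
  exact le_antisymm (Nat.sInf_le heS) (Nat.le_of_dvd h2.1 h2.2)

theorem stmt17 {K : Type*} [Field K] [Fintype K] (p : ℕ) [CharP K p] (hp : Odd p)
    (a b : K[X]) (hb : b ≠ 0)
    (P : K[X]) (hP : Irreducible P) (hco : IsCoprime b P)
    (hnqr : ∀ g : K[X], ¬ P ∣ (g ^ 2 - (a ^ 2 + 4 * b))) :
    fibRank a b P ∣ Fintype.card K ^ P.natDegree + 1 ∧
    fibPeriod a b P ∣ (Fintype.card K ^ P.natDegree + 1) * polyOrd P (-b) := by
  classical
  haveI hPfact : Fact (Irreducible P) := ⟨hP⟩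
  set q := Fintype.card K with hq
  set d := P.natDegree with hd
  set Q := q ^ d with hQdef
  -- the residue field L = AdjoinRoot P
  let pb : PowerBasis K (AdjoinRoot P) := AdjoinRoot.powerBasis hP.ne_zero
  haveI : Fintype (AdjoinRoot P) := Module.fintypeOfFintype pb.basis
  have hcardL : Fintype.card (AdjoinRoot P) = Q := by
    rw [Module.card_fintype pb.basis, Fintype.card_fin]
    rfl
  have hd1 : 0 < d := hP.natDegree_pos
  have hq2 : 1 < q := Fintype.one_lt_card
  have hQ2 : 1 < Q := one_lt_pow' hq2 hd1.ne'
  -- characteristic facts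
  haveI hp' : Fact p.Prime := ⟨CharP.char_is_prime K p⟩
  have hp2 : p ≠ 2 := by
    rintro rfl
    exact (Nat.not_odd_iff_even.mpr even_two) hp
  haveI : CharP (AdjoinRoot P) p :=
    charP_of_injective_ringHom (algebraMap K (AdjoinRoot P)).injective p
  have hringCharL : ringChar (AdjoinRoot P) = p := ringChar.eq _ p
  have hchar2 : ringChar (AdjoinRoot P) ≠ 2 := by rw [hringCharL]; exact hp2
  have hQodd : Q % 2 = 1 := by
    rw [← hcardL]
    exact FiniteField.odd_card_of_char_ne_two hchar2
  -- the discriminant in L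
  set Δ' : AdjoinRoot P := AdjoinRoot.mk P (a ^ 2 + 4 * b) with hΔ'
  have hns : ∀ u : AdjoinRoot P, u ^ 2 ≠ Δ' := by
    intro u hu
    obtain ⟨g, rfl⟩ := AdjoinRoot.mk_surjective u
    refine hnqr g ?_
    rw [← AdjoinRoot.mk_eq_zero (f := P), map_sub, map_pow, ← hΔ', hu]
    exact sub_self _
  have hΔ'0 : Δ' ≠ 0 := fun h => hns 0 (by rw [h]; ring)
  have hnotsq : ¬ IsSquare Δ' := by
    rintro ⟨u, hu⟩
    exact hns u (by rw [hu]; ring)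
  have hEuler : Δ' ^ (Q / 2) = -1 := by
    have h := (FiniteField.pow_dichotomy hchar2 hΔ'0).resolve_left
      (fun h => hnotsq ((FiniteField.isSquare_iff hchar2 hΔ'0).mpr h))
    rwa [hcardL] at h
  -- the quadratic extension R
  have hirr : Irreducible (X ^ 2 - C Δ') :=
    X_pow_sub_C_irreducible_of_prime Nat.prime_two (fun u => hns u)
  haveI : Fact (Irreducible (X ^ 2 - C Δ')) := ⟨hirr⟩
  set R := AdjoinRoot (X ^ 2 - C Δ') with hR
  haveI : CharP R p :=
    charP_of_injective_ringHom (algebraMap (AdjoinRoot P) R).injective p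
  set ι : AdjoinRoot P →+* R := algebraMap (AdjoinRoot P) R with hι'
  have hι : Function.Injective ι := ι.injective
  set y : R := AdjoinRoot.root (X ^ 2 - C Δ') with hy
  have hy2 : y ^ 2 = ι Δ' := by
    have h0 : AdjoinRoot.mk (X ^ 2 - C Δ') (X ^ 2 - C Δ') = 0 := AdjoinRoot.mk_self
    rw [map_sub, map_pow, AdjoinRoot.mk_X, AdjoinRoot.mk_C, sub_eq_zero] at h0
    rw [← hy] at h0
    rw [h0, hι', AdjoinRoot.algebraMap_eq]
  have hyne : y ≠ 0 := by
    intro h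
    apply hΔ'0
    apply hι
    rw [← hy2, h, map_zero]
    ring
  have h2R : (2 : R) ≠ 0 := by
    intro h0
    have h2 : (p : ℕ) ∣ 2 := (CharP.cast_eq_zero_iff R p 2).mp (by exact_mod_cast h0)
    exact hp2 ((Nat.prime_dvd_prime_iff_eq hp'.1 Nat.prime_two).mp h2)
  set c : R := (2 : R)⁻¹ with hc
  have h2c : (2 : R) * c = 1 := mul_inv_cancel₀ h2R
  set A : R := ι (AdjoinRoot.mk P a) with hA
  set B : R := ι (AdjoinRoot.mk P b) with hB
  have hPb : ¬ P ∣ b := fun hdvd => hP.not_isUnit (hco.isUnit_of_dvd' hdvd dvd_rfl)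
  have hB0 : B ≠ 0 := by
    intro h
    apply hPb
    rw [← AdjoinRoot.mk_eq_zero (f := P)]
    apply hι
    rw [map_zero]
    exact h
  set r : R := (A + y) * c with hr
  set s : R := (A - y) * c with hs
  have hy2' : y ^ 2 = A ^ 2 + 4 * B := by
    rw [hy2]
    show ι ((AdjoinRoot.mk P) (a ^ 2 + 4 * b)) =
      ι ((AdjoinRoot.mk P) a) ^ 2 + 4 * ι ((AdjoinRoot.mk P) b)
    simp only [map_add, map_pow, map_mul, map_ofNat]
  have hrs_add : r + s = A := by
    have h : r + s = A * ((2 : R) * c) := by rw [hr, hs]; ring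
    rw [h, h2c, mul_one]
  have hrsub : r - s = y := by
    have h : r - s = y * ((2 : R) * c) := by rw [hr, hs]; ring
    rw [h, h2c, mul_one]
  have hrs_mul : r * s = -B := by
    have h : r * s = (A ^ 2 - y ^ 2) * (c * c) := by rw [hr, hs]; ring
    rw [hy2'] at h
    have h2 : r * s = -B * (((2 : R) * c) * ((2 : R) * c)) := by rw [h]; ring
    rw [h2c, one_mul, mul_one] at h2
    exact h2
  have hrq : r ^ 2 = A * r + B := by linear_combination r * hrs_add - hrs_mul
  have hsq : s ^ 2 = A * s + B := by linear_combination s * hrs_add - hrs_mul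
  -- Binet formula
  set ρ : K[X] →+* R := ι.comp (AdjoinRoot.mk P) with hρ
  have hρa : ρ a = A := rfl
  have hρb : ρ b = B := rfl
  have binet := binet_aux a b ρ r s (by rw [hρa, hρb]; exact hrq)
    (by rw [hρa, hρb]; exact hsq)
  -- Frobenius
  obtain ⟨n, hn⟩ := FiniteField.card K p
  have hQpow : Q = p ^ ((n : ℕ) * d) := by rw [hQdef, hq, hn.2, ← pow_mul]
  have hfrob : ∀ z w : R, (z + w) ^ Q = z ^ Q + w ^ Q := by
    intro z w
    rw [hQpow]
    exact add_pow_char_pow z w p _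
  have hLQ : ∀ z : AdjoinRoot P, z ^ Q = z := fun z => by
    rw [← hcardL]; exact FiniteField.pow_card z
  have hAQ : A ^ Q = A := by rw [hA, ← map_pow, hLQ]
  have h2Q : (2 : R) ^ Q = 2 := by
    have h : ((2 : R)) = ι (2 : AdjoinRoot P) := by rw [map_ofNat]
    rw [h, ← map_pow, hLQ]
  have hcQ : c ^ Q = c := by rw [hc, inv_pow, h2Q]
  have hQ12 : 2 * (Q / 2) + 1 = Q := by omega
  have hyQ : y ^ Q = -y := by
    have h1 : y ^ Q = (y ^ 2) ^ (Q / 2) * y := by rw [← pow_mul, ← pow_succ, hQ12]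
    rw [h1, hy2, ← map_pow, hEuler, map_neg, map_one]
    ring
  have hQodd' : Odd Q := Nat.odd_iff.mpr hQodd
  have hrQ : r ^ Q = s := by
    rw [hr, mul_pow, hfrob, hAQ, hyQ, hcQ, hs]
    ring
  have hsQ : s ^ Q = r := by
    have h : s = (A + (-y)) * c := by rw [hs]; ring
    rw [h, mul_pow, hfrob, hAQ, hcQ, hQodd'.neg_pow, hyQ, hr]
    ring
  have hs0 : s ≠ 0 := by
    intro h
    apply hB0
    have h' := hrs_mul
    rw [h, mul_zero] at h'
    exact neg_eq_zero.mp h'.symm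
  have hrQ1 : r ^ (Q + 1) = -B := by rw [pow_succ, hrQ, mul_comm s r, hrs_mul]
  have hsQ1 : s ^ (Q + 1) = -B := by rw [pow_succ, hsQ, hrs_mul]
  -- divisibility characterization
  have hmk_iff : ∀ z : K[X], P ∣ z ↔ ρ z = 0 := by
    intro z
    rw [← AdjoinRoot.mk_eq_zero (f := P)]
    constructor
    · intro h; rw [hρ, RingHom.comp_apply, h, map_zero]
    · intro h
      rw [hρ, RingHom.comp_apply] at h
      apply hι
      rw [map_zero]
      exact h
  have hy0 : r - s ≠ 0 := by rw [hrsub]; exact hyne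
  have hdvd_iff : ∀ m : ℕ, (P ∣ genFib a b m) ↔ r ^ m = s ^ m := by
    intro m
    rw [hmk_iff]
    constructor
    · intro h
      have hb' := binet m
      rw [h, zero_mul] at hb'
      exact sub_eq_zero.mp hb'.symm
    · intro h
      have hb' := binet m
      rw [h, sub_self] at hb'
      rcases mul_eq_zero.mp hb' with h' | h'
      · exact h'
      · exact absurd h' hy0
  -- PART 1
  set x : R := r * s⁻¹ with hx
  have hxpow : ∀ m : ℕ, (x ^ m = 1 ↔ r ^ m = s ^ m) := by
    intro m
    rw [hx, mul_pow, inv_pow, mul_inv_eq_one₀ (pow_ne_zero m hs0)]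
  have hxQ1 : x ^ (Q + 1) = 1 := (hxpow _).mpr (by rw [hrQ1, hsQ1])
  have heQ : orderOf x ∣ Q + 1 := orderOf_dvd_of_pow_eq_one hxQ1
  have he0 : 0 < orderOf x := by
    rcases Nat.eq_zero_or_pos (orderOf x) with h | h
    · rw [h] at heQ
      exact absurd (Nat.eq_zero_of_zero_dvd heQ) (by omega)
    · exact h
  have hSet1 : {m : ℕ | 0 < m ∧ P ∣ genFib a b m} = {m | 0 < m ∧ orderOf x ∣ m} := by
    ext m
    simp only [Set.mem_setOf_eq]
    constructor
    · rintro ⟨h1, h2⟩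
      exact ⟨h1, orderOf_dvd_of_pow_eq_one ((hxpow m).mpr ((hdvd_iff m).mp h2))⟩
    · rintro ⟨h1, h2⟩
      exact ⟨h1, (hdvd_iff m).mpr ((hxpow m).mp (orderOf_dvd_iff_pow_eq_one.mp h2))⟩
  have part1 : fibRank a b P ∣ Q + 1 := by
    have hfr : fibRank a b P = sInf {m : ℕ | 0 < m ∧ P ∣ genFib a b m} := rfl
    rw [hfr, hSet1, sInf_eq_of_set he0]
    exact heQ
  -- PART 2
  set m0 := polyOrd P (-b) with hm0def
  have hpol : polyOrd P (-b) = orderOf (AdjoinRoot.mk P (-b)) := rfl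
  have hmB : (-B) ^ m0 = 1 := by
    have h1 : (AdjoinRoot.mk P (-b)) ^ m0 = 1 := by
      rw [hm0def, hpol]; exact pow_orderOf_eq_one _
    have h2 : (-B) = ι (AdjoinRoot.mk P (-b)) := by rw [map_neg, map_neg, hB]
    rw [h2, ← map_pow, h1, map_one]
  have hm0pos : 0 < m0 := by
    have hne : AdjoinRoot.mk P (-b) ≠ 0 := by
      rw [map_neg, neg_ne_zero, ne_eq, AdjoinRoot.mk_eq_zero]
      exact hPb
    have hpow := FiniteField.pow_card_sub_one_eq_one _ hne
    have hdvd : orderOf (AdjoinRoot.mk P (-b)) ∣ Fintype.card (AdjoinRoot P) - 1 :=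
      orderOf_dvd_of_pow_eq_one hpow
    rw [hcardL] at hdvd
    rw [hm0def, hpol]
    rcases Nat.eq_zero_or_pos (orderOf (AdjoinRoot.mk P (-b))) with h | h
    · rw [h] at hdvd
      have := Nat.eq_zero_of_zero_dvd hdvd
      omega
    · exact h
  have hrN : r ^ ((Q + 1) * m0) = 1 := by rw [pow_mul, hrQ1, hmB]
  have hsN : s ^ ((Q + 1) * m0) = 1 := by rw [pow_mul, hsQ1, hmB]
  set e' := Nat.lcm (orderOf r) (orderOf s) with he'
  have he'N : e' ∣ (Q + 1) * m0 :=
    Nat.lcm_dvd (orderOf_dvd_of_pow_eq_one hrN) (orderOf_dvd_of_pow_eq_one hsN)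
  have hN0 : (Q + 1) * m0 ≠ 0 := by positivity
  have he'0 : 0 < e' := by
    rcases Nat.eq_zero_or_pos e' with h | h
    · rw [h] at he'N
      exact absurd (Nat.eq_zero_of_zero_dvd he'N) hN0
    · exact h
  have hper_iff : ∀ m : ℕ,
      (P ∣ genFib a b m ∧ P ∣ (genFib a b (m + 1) - 1)) ↔ (r ^ m = 1 ∧ s ^ m = 1) := by
    intro m
    constructor
    · rintro ⟨h1, h2⟩
      have hrm : r ^ m = s ^ m := (hdvd_iff m).mp h1
      have hF1 : ρ (genFib a b (m + 1)) = 1 := by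
        rw [hmk_iff, map_sub, map_one, sub_eq_zero] at h2
        exact h2
      have hb1 := binet (m + 1)
      rw [hF1, one_mul] at hb1
      have hkey : (r ^ m - 1) * (r - s) = 0 := by
        linear_combination (-1 : R) * hb1 + (-s) * hrm
      have hr1 : r ^ m = 1 := by
        rcases mul_eq_zero.mp hkey with h' | h'
        · exact sub_eq_zero.mp h'
        · exact absurd h' hy0
      exact ⟨hr1, by rw [← hrm, hr1]⟩
    · rintro ⟨h1, h2⟩
      constructor
      · exact (hdvd_iff m).mpr (by rw [h1, h2])
      · rw [hmk_iff, map_sub, map_one, sub_eq_zero]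
        have hb1 := binet (m + 1)
        have hstep : r ^ (m + 1) - s ^ (m + 1) = r - s := by
          linear_combination r * h1 - s * h2
        rw [hstep] at hb1
        have : ρ (genFib a b (m + 1)) * (r - s) = 1 * (r - s) := by rw [hb1, one_mul]
        exact mul_right_cancel₀ hy0 this
  have hSet2 : {m : ℕ | 0 < m ∧ P ∣ genFib a b m ∧ P ∣ (genFib a b (m + 1) - 1)} =
      {m | 0 < m ∧ e' ∣ m} := by
    ext m
    simp only [Set.mem_setOf_eq]
    constructor
    · rintro ⟨h0, h1, h2⟩
      obtain ⟨hr1, hs1⟩ := (hper_iff m).mp ⟨h1, h2⟩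
      exact ⟨h0, Nat.lcm_dvd (orderOf_dvd_of_pow_eq_one hr1) (orderOf_dvd_of_pow_eq_one hs1)⟩
    · rintro ⟨h0, hdv⟩
      have hr1 : r ^ m = 1 := orderOf_dvd_iff_pow_eq_one.mp ((Nat.dvd_lcm_left _ _).trans hdv)
      have hs1 : s ^ m = 1 := orderOf_dvd_iff_pow_eq_one.mp ((Nat.dvd_lcm_right _ _).trans hdv)
      exact ⟨h0, (hper_iff m).mpr ⟨hr1, hs1⟩⟩
  have part2 : fibPeriod a b P ∣ (Q + 1) * m0 := by
    have hfp : fibPeriod a b P =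
        sInf {m : ℕ | 0 < m ∧ P ∣ genFib a b m ∧ P ∣ (genFib a b (m + 1) - 1)} := rfl
    rw [hfp, hSet2, sInf_eq_of_set he'0]
    exact he'N
  exact ⟨part1, part2⟩
end

section
/- Let p be odd and P ∈ F_q[x] irreducible with gcd(b,P)=1. If Δ = a^2+4b ≡ 0 (mod P), then α(P) = p and π(P) = p · ord_P(2^{−1}a). -/
open Polynomial

set_option maxHeartbeats 1000000 in
theorem stmt18 {K : Type*} [Field K] [Fintype K] (p : ℕ) [CharP K p] (hp : Odd p)
    (a b : K[X]) (hb : b ≠ 0)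
    (P : K[X]) (hP : Irreducible P) (hco : IsCoprime b P)
    (hdelta : P ∣ (a ^ 2 + 4 * b)) :
    fibRank a b P = p ∧
    fibPeriod a b P = p * polyOrd P (C (2 : K)⁻¹ * a) := by
  haveI hmax : (Ideal.span {P}).IsMaximal :=
    PrincipalIdealRing.isMaximal_of_irreducible hP
  set L := K[X] ⧸ Ideal.span {P} with hLdef
  set φ : K[X] →+* L := Ideal.Quotient.mk (Ideal.span {P}) with hφdef
  haveI hppr : Fact p.Prime := ⟨CharP.char_is_prime K p⟩
  have hp2 : p ≠ 2 := by rintro rfl; exact (by norm_num : ¬ Odd 2) hp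
  have h2K : (2 : K) ≠ 0 :=
    Ring.two_ne_zero (by rw [ringChar.eq K p]; exact hp2)
  haveI hcharL : CharP L p :=
    charP_of_injective_ringHom (φ.comp (C : K →+* K[X])).injective p
  haveI : Module.Finite K (AdjoinRoot P) := (AdjoinRoot.powerBasis hP.ne_zero).finite
  haveI hLfin : Finite L := Module.finite_of_finite K (M := AdjoinRoot P)
  have h2L : (2 : L) ≠ 0 :=
    Ring.two_ne_zero (by rw [ringChar.eq L p]; exact hp2)
  have hdvd : ∀ f : K[X], (P ∣ f ↔ φ f = 0) := fun f => by
    rw [hφdef, Ideal.Quotient.eq_zero_iff_mem, Ideal.mem_span_singleton]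
  set r : L := φ (C (2 : K)⁻¹ * a) with hrdef
  have ha2r : φ a = 2 * r := by
    have h2 : φ (C (2:K)) = 2 := by rw [map_ofNat C, map_ofNat]
    have hmul : φ (C (2:K)) * φ (C (2:K)⁻¹) = 1 := by
      rw [← map_mul, ← C_mul, mul_inv_cancel₀ h2K, map_one, map_one]
    rw [h2] at hmul
    rw [hrdef, map_mul]
    linear_combination (-φ a) * hmul
  have hbr : φ b = - r ^ 2 := by
    have h0 : φ (a ^ 2 + 4 * b) = 0 := (hdvd _).1 hdelta
    rw [map_add, map_mul, map_pow, ha2r, map_ofNat] at h0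
    have h4 : (4 : L) ≠ 0 := by
      have h44 : (4 : L) = 2 * 2 := by norm_num
      rw [h44]; exact mul_ne_zero h2L h2L
    have h0' : (4 : L) * (φ b + r ^ 2) = 0 := by linear_combination h0
    rcases mul_eq_zero.1 h0' with h | h
    · exact absurd h h4
    · linear_combination h
  have hbne : φ b ≠ 0 := fun h =>
    hP.not_isUnit (hco.isUnit_of_dvd' ((hdvd b).2 h) dvd_rfl)
  have hrne : r ≠ 0 := by
    intro h; apply hbne; rw [hbr, h]; ring
  have key : ∀ n : ℕ, φ (genFib a b n) = (n : L) * r ^ (n - 1) := by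
    intro n
    induction n using Nat.twoStepInduction with
    | zero => simp [genFib]
    | one => simp [genFib]
    | more n ih1 ih2 =>
      have hr2 : (n : L) * r ^ (n - 1) * r ^ 2 = (n : L) * r ^ (n + 1) := by
        cases n with
        | zero => simp
        | succ m => simp only [Nat.add_sub_cancel]; push_cast; ring
      rw [show genFib a b (n+2) = a * genFib a b (n+1) + b * genFib a b n from rfl]
      rw [map_add, map_mul, map_mul, ih2, ih1, ha2r, hbr]
      simp only [Nat.add_sub_cancel]
      push_cast
      linear_combination -hr2
  have hzero : ∀ n : ℕ, (P ∣ genFib a b n ↔ p ∣ n) := fun n => by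
    rw [hdvd, key, mul_eq_zero]
    simp [pow_ne_zero _ hrne, CharP.cast_eq_zero_iff L p]
  have hrank : fibRank a b P = p := by
    apply le_antisymm
    · exact Nat.sInf_le ⟨hppr.out.pos, (hzero p).2 dvd_rfl⟩
    · obtain ⟨hpos, hdv⟩ := Nat.sInf_mem
        (⟨p, hppr.out.pos, (hzero p).2 dvd_rfl⟩ :
          {n : ℕ | 0 < n ∧ P ∣ genFib a b n}.Nonempty)
      exact Nat.le_of_dvd hpos ((hzero _).1 hdv)
  have hd : polyOrd P (C (2:K)⁻¹ * a) = orderOf r := rfl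
  haveI : ExpChar L p := .prime hppr.out
  have hdpos : 0 < orderOf r := by
    refine IsOfFinOrder.orderOf_pos ?_
    obtain ⟨i, j, hne, hij⟩ := Finite.exists_ne_map_eq_of_infinite (fun n : ℕ => r ^ n)
    have hij' : r ^ i = r ^ j := hij
    clear hij
    wlog hlt : i < j generalizing i j
    · exact this j i hne.symm hij'.symm (by omega)
    refine isOfFinOrder_iff_pow_eq_one.2 ⟨j - i, by omega, ?_⟩
    apply mul_left_cancel₀ (pow_ne_zero i hrne)
    rw [mul_one, ← pow_add, Nat.add_sub_cancel' (le_of_lt hlt)]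
    exact hij'.symm
  have hpd : ¬ p ∣ orderOf r := by
    intro hdvd'
    obtain ⟨m, hm⟩ := hdvd'
    have h1 : (r ^ m) ^ p = 1 := by
      rw [← pow_mul, mul_comm, ← hm, pow_orderOf_eq_one]
    have h2 : r ^ m = 1 := by
      apply frobenius_inj L p
      rw [frobenius_def, frobenius_def, h1, one_pow]
    have hdm : orderOf r ∣ m := orderOf_dvd_of_pow_eq_one h2
    have hmpos : 0 < m := by
      rcases Nat.eq_zero_or_pos m with h | h
      · rw [h, mul_zero] at hm; omega
      · exact h
    have := Nat.le_of_dvd hmpos hdm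
    have hp2' : 2 ≤ p := hppr.out.two_le
    nlinarith [hm]
  have hcop : Nat.Coprime p (orderOf r) :=
    (Nat.Prime.coprime_iff_not_dvd hppr.out).2 hpd
  have hper : ∀ n : ℕ,
      ((P ∣ genFib a b n ∧ P ∣ (genFib a b (n+1) - 1)) ↔ (p ∣ n ∧ orderOf r ∣ n)) := by
    intro n
    constructor
    · rintro ⟨h1, h2⟩
      have hpn : p ∣ n := (hzero n).1 h1
      refine ⟨hpn, ?_⟩
      have h3 : φ (genFib a b (n+1) - 1) = 0 := (hdvd _).1 h2
      rw [map_sub, map_one, key, Nat.add_sub_cancel] at h3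
      have hn0 : (n : L) = 0 := (CharP.cast_eq_zero_iff L p n).2 hpn
      push_cast at h3
      rw [hn0] at h3
      apply orderOf_dvd_of_pow_eq_one
      linear_combination h3
    · rintro ⟨h1, h2⟩
      refine ⟨(hzero n).2 h1, ?_⟩
      rw [hdvd, map_sub, map_one, key, Nat.add_sub_cancel]
      have hn0 : (n : L) = 0 := (CharP.cast_eq_zero_iff L p n).2 h1
      have hrn : r ^ n = 1 := orderOf_dvd_iff_pow_eq_one.1 h2
      push_cast
      rw [hn0, hrn]
      ring
  have hperiod : fibPeriod a b P = p * orderOf r := by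
    have hmem : p * orderOf r ∈
        {n : ℕ | 0 < n ∧ P ∣ genFib a b n ∧ P ∣ (genFib a b (n + 1) - 1)} :=
      ⟨Nat.mul_pos hppr.out.pos hdpos,
        (hper _).2 ⟨Dvd.intro _ rfl, Dvd.intro_left _ rfl⟩⟩
    apply le_antisymm
    · exact Nat.sInf_le hmem
    · obtain ⟨hpos, hdv⟩ := Nat.sInf_mem (⟨_, hmem⟩ :
        {n : ℕ | 0 < n ∧ P ∣ genFib a b n ∧ P ∣ (genFib a b (n + 1) - 1)}.Nonempty)
      obtain ⟨hpn, hdn⟩ := (hper _).1 hdv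
      exact Nat.le_of_dvd hpos (Nat.Coprime.mul_dvd_of_dvd_of_dvd hcop hpn hdn)
  exact ⟨hrank, by rw [hperiod, hd]⟩
end

section
/- For a non-constant M ∈ F_q[x] coprime to b: β(M) := π(M)/α(M) divides 2·ord_M(−b), and π(M) equals either lcm(α(M), ord_M(−b)) or 2·lcm(α(M), ord_M(−b)). -/
/-!
Reduce modulo `M`: in the finite ring `K[X]/(M)`, with `B` the image of `b` (a unit, as `b` is
coprime to `M`), the reduced sequence `F` satisfies Cassini's identity and
`F (m + n + 1) = F (m + 1) F (n + 1) + B F m F n`. Writing `α` for the rank and `c = F (α + 1)`,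
the latter gives `F (q α + k) = c ^ q F k`, so the zeros of `F` are the multiples of `α` and
`π = α · ord c`; Cassini gives `c ^ 2 = (-B) ^ α`. Comparing the orders of the two sides of this
identity yields both claims.
-/

open Polynomial

lemma Nat.sInf_setOf_pos_and_dvd {k : ℕ} (hk : 0 < k) : sInf {n | 0 < n ∧ k ∣ n} = k :=
  le_antisymm (Nat.sInf_le ⟨hk, dvd_rfl⟩)
    (le_csInf ⟨k, hk, dvd_rfl⟩ fun _ ⟨hn, hdvd⟩ => Nat.le_of_dvd hn hdvd)

section SqEqPow

variable {G : Type*} [Monoid G] {x y : G} {k : ℕ} (h : x ^ 2 = y ^ k)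
include h

lemma orderOf_dvd_two_mul_of_sq_eq_pow : orderOf x ∣ 2 * orderOf y :=
  orderOf_dvd_of_pow_eq_one <| by
    rw [pow_mul, h, ← pow_mul, mul_comm, pow_mul, pow_orderOf_eq_one, one_pow]

lemma mul_orderOf_eq_lcm_or_eq_two_mul_lcm_of_sq_eq_pow (hy : IsOfFinOrder y) :
    k * orderOf x = Nat.lcm k (orderOf y) ∨ k * orderOf x = 2 * Nat.lcm k (orderOf y) := by
  have hx : IsOfFinOrder x := (isOfFinOrder_pow.1 (h ▸ hy.pow)).resolve_right two_ne_zero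
  have hord : orderOf x / (orderOf x).gcd 2 = orderOf y / (orderOf y).gcd k := by
    rw [← hx.orderOf_pow, ← hy.orderOf_pow, h]
  have hlcm : Nat.lcm k (orderOf y) = k * (orderOf y / (orderOf y).gcd k) := by
    rw [Nat.lcm, Nat.gcd_comm, Nat.mul_div_assoc _ (Nat.gcd_dvd_left _ _)]
  rw [hlcm, ← hord]
  rcases (Nat.dvd_prime Nat.prime_two).1 (Nat.gcd_dvd_right (orderOf x) 2) with h1 | h2
  · left
    rw [h1, Nat.div_one]
  · right
    rw [h2, mul_left_comm, Nat.mul_div_cancel' (h2 ▸ Nat.gcd_dvd_left _ _)]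

end SqEqPow

section FibSeq

variable {R : Type*} [CommRing R]

def fibSeq (A B : R) : ℕ → R
  | 0 => 0
  | 1 => 1
  | n + 2 => A * fibSeq A B (n + 1) + B * fibSeq A B n

variable (A B : R)

@[simp] lemma fibSeq_zero : fibSeq A B 0 = 0 := rfl

@[simp] lemma fibSeq_one : fibSeq A B 1 = 1 := rfl

lemma fibSeq_add_two (n : ℕ) :
    fibSeq A B (n + 2) = A * fibSeq A B (n + 1) + B * fibSeq A B n := rfl

lemma map_fibSeq {S : Type*} [CommRing S] (φ : R →+* S) (n : ℕ) :
    φ (fibSeq A B n) = fibSeq (φ A) (φ B) n := by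
  induction n using Nat.twoStepInduction with
  | zero => simp
  | one => simp
  | more n ih₀ ih₁ => simp [fibSeq_add_two, ih₀, ih₁]

lemma fibSeq_add (m n : ℕ) :
    fibSeq A B (m + n + 1) =
      fibSeq A B (m + 1) * fibSeq A B (n + 1) + B * fibSeq A B m * fibSeq A B n := by
  induction m generalizing n with
  | zero => simp
  | succ m ih =>
    rw [show m + 1 + n + 1 = m + (n + 1) + 1 by omega, ih, fibSeq_add_two, fibSeq_add_two]
    ring

lemma fibSeq_cassini (n : ℕ) :
    fibSeq A B (n + 2) * fibSeq A B n + (-B) ^ n = fibSeq A B (n + 1) ^ 2 := by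
  induction n with
  | zero => simp
  | succ n ih =>
    rw [fibSeq_add_two] at ih
    rw [fibSeq_add_two, fibSeq_add_two A B n, pow_succ]
    linear_combination (-B) * ih

section Zero

variable {A B : R} {α : ℕ} (hα : fibSeq A B α = 0)
include hα

lemma fibSeq_add_of_eq_zero (k : ℕ) :
    fibSeq A B (α + k) = fibSeq A B (α + 1) * fibSeq A B k := by
  cases k with
  | zero => simp [hα]
  | succ k => simpa [hα, ← add_assoc] using fibSeq_add A B α k

lemma fibSeq_mul_add_of_eq_zero (q k : ℕ) :
    fibSeq A B (q * α + k) = fibSeq A B (α + 1) ^ q * fibSeq A B k := by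
  induction q with
  | zero => simp
  | succ q ih =>
    rw [add_mul, one_mul, add_comm _ α, add_assoc, fibSeq_add_of_eq_zero hα, ih, pow_succ']
    ring

lemma fibSeq_succ_sq_of_eq_zero : fibSeq A B (α + 1) ^ 2 = (-B) ^ α := by
  cases α with
  | zero => simp
  | succ t =>
    have hcas := fibSeq_cassini A B t
    have hrec := fibSeq_add_two A B t
    rw [hα] at hcas hrec
    linear_combination B * hcas + fibSeq A B (t + 2) * hrec

lemma isUnit_fibSeq_succ_of_eq_zero (hB : IsUnit B) : IsUnit (fibSeq A B (α + 1)) :=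
  (isUnit_pow_iff two_ne_zero).mp (fibSeq_succ_sq_of_eq_zero hα ▸ hB.neg.pow α)

end Zero

def fibStep (A : R) (B : Rˣ) : Equiv.Perm (R × R) where
  toFun p := (p.2, A * p.2 + B * p.1)
  invFun p := (B⁻¹ * (p.2 - A * p.1), p.1)
  left_inv p := by ext <;> simp
  right_inv p := by ext <;> simp

lemma fibStep_pow_apply (A : R) (B : Rˣ) (n : ℕ) :
    (fibStep A B ^ n) (0, 1) = (fibSeq A B n, fibSeq A B (n + 1)) := by
  induction n with
  | zero => simp
  | succ n ih => rw [pow_succ', Equiv.Perm.mul_apply, ih]; rfl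

lemma exists_fibSeq_eq_zero_and_succ_eq_one [Finite R] {B : R} (hB : IsUnit B) :
    ∃ n, 0 < n ∧ fibSeq A B n = 0 ∧ fibSeq A B (n + 1) = 1 := by
  obtain ⟨u, rfl⟩ := hB
  have h := fibStep_pow_apply A u (orderOf (fibStep A u))
  rw [pow_orderOf_eq_one, Equiv.Perm.one_apply, Prod.mk.injEq] at h
  exact ⟨_, orderOf_pos _, h.1.symm, h.2.symm⟩

noncomputable def fibSeqRank (A B : R) : ℕ := sInf {n | 0 < n ∧ fibSeq A B n = 0}

noncomputable def fibSeqPeriod (A B : R) : ℕ :=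
  sInf {n | 0 < n ∧ fibSeq A B n = 0 ∧ fibSeq A B (n + 1) = 1}

lemma fibSeqRank_le {A B : R} {n : ℕ} (hn : 0 < n) (h : fibSeq A B n = 0) :
    fibSeqRank A B ≤ n :=
  Nat.sInf_le ⟨hn, h⟩

section Finite

variable [Finite R] {A B : R} (hB : IsUnit B)
include hB

lemma fibSeqRank_pos_and_eq_zero : 0 < fibSeqRank A B ∧ fibSeq A B (fibSeqRank A B) = 0 := by
  obtain ⟨n, hn, h₀, -⟩ := exists_fibSeq_eq_zero_and_succ_eq_one A hB
  exact Nat.sInf_mem (s := {n | 0 < n ∧ fibSeq A B n = 0}) ⟨n, hn, h₀⟩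

lemma fibSeq_eq_zero_iff {n : ℕ} : fibSeq A B n = 0 ↔ fibSeqRank A B ∣ n := by
  obtain ⟨hpos, hzero⟩ := fibSeqRank_pos_and_eq_zero (A := A) hB
  set α := fibSeqRank A B
  have hdecomp := fibSeq_mul_add_of_eq_zero hzero (n / α) (n % α)
  rw [mul_comm, Nat.div_add_mod] at hdecomp
  rw [hdecomp, ((isUnit_fibSeq_succ_of_eq_zero hzero hB).pow _).mul_right_eq_zero,
    Nat.dvd_iff_mod_eq_zero]
  constructor
  · intro hmod
    by_contra hne
    exact (Nat.mod_lt n hpos).not_ge (fibSeqRank_le (Nat.pos_of_ne_zero hne) hmod)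
  · intro hmod
    rw [hmod, fibSeq_zero]

lemma fibSeq_eq_zero_and_succ_eq_one_iff {n : ℕ} :
    fibSeq A B n = 0 ∧ fibSeq A B (n + 1) = 1 ↔
      fibSeqRank A B * orderOf (fibSeq A B (fibSeqRank A B + 1)) ∣ n := by
  have hzero := (fibSeqRank_pos_and_eq_zero (A := A) hB).2
  have hshift (q : ℕ) :
      fibSeq A B (q * fibSeqRank A B + 1) = fibSeq A B (fibSeqRank A B + 1) ^ q := by
    simpa using fibSeq_mul_add_of_eq_zero hzero q 1
  rw [fibSeq_eq_zero_iff hB]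
  constructor
  · rintro ⟨⟨q, rfl⟩, hone⟩
    rw [mul_comm, hshift] at hone
    exact mul_dvd_mul_left _ (orderOf_dvd_of_pow_eq_one hone)
  · rintro ⟨q, rfl⟩
    refine ⟨dvd_mul_of_dvd_left (dvd_mul_right _ _) _, ?_⟩
    rw [mul_assoc, mul_comm, hshift, pow_mul, pow_orderOf_eq_one, one_pow]

lemma fibSeqPeriod_eq_fibSeqRank_mul_orderOf :
    fibSeqPeriod A B = fibSeqRank A B * orderOf (fibSeq A B (fibSeqRank A B + 1)) := by
  obtain ⟨hpos, hzero⟩ := fibSeqRank_pos_and_eq_zero (A := A) hB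
  have hord : 0 < orderOf (fibSeq A B (fibSeqRank A B + 1)) :=
    (isOfFinOrder_iff_isUnit.2 (isUnit_fibSeq_succ_of_eq_zero hzero hB)).orderOf_pos
  simp only [fibSeqPeriod, fibSeq_eq_zero_and_succ_eq_one_iff hB]
  exact Nat.sInf_setOf_pos_and_dvd (Nat.mul_pos hpos hord)

theorem fibSeqPeriod_div_fibSeqRank_dvd_two_mul_orderOf :
    fibSeqPeriod A B / fibSeqRank A B ∣ 2 * orderOf (-B) := by
  obtain ⟨hpos, hzero⟩ := fibSeqRank_pos_and_eq_zero (A := A) hB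
  rw [fibSeqPeriod_eq_fibSeqRank_mul_orderOf hB, Nat.mul_div_cancel_left _ hpos]
  exact orderOf_dvd_two_mul_of_sq_eq_pow (fibSeq_succ_sq_of_eq_zero hzero)

theorem fibSeqPeriod_eq_lcm_or_eq_two_mul_lcm :
    fibSeqPeriod A B = Nat.lcm (fibSeqRank A B) (orderOf (-B)) ∨
      fibSeqPeriod A B = 2 * Nat.lcm (fibSeqRank A B) (orderOf (-B)) := by
  rw [fibSeqPeriod_eq_fibSeqRank_mul_orderOf hB]
  exact mul_orderOf_eq_lcm_or_eq_two_mul_lcm_of_sq_eq_pow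
    (fibSeq_succ_sq_of_eq_zero (fibSeqRank_pos_and_eq_zero hB).2)
    (isOfFinOrder_iff_isUnit.2 hB.neg)

end Finite

end FibSeq

lemma Ideal.Quotient.eq_one_iff_dvd_sub_one {R : Type*} [CommRing R] (x y : R) :
    Ideal.Quotient.mk (Ideal.span {x}) y = 1 ↔ x ∣ y - 1 := by
  rw [← Ideal.Quotient.eq_zero_iff_dvd, map_sub, map_one, sub_eq_zero]

lemma IsCoprime.isUnit_quotient_mk {R : Type*} [CommRing R] {x y : R} (h : IsCoprime x y) :
    IsUnit (Ideal.Quotient.mk (Ideal.span {y}) x) := by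
  obtain ⟨u, v, huv⟩ := h
  refine IsUnit.of_mul_eq_one (Ideal.Quotient.mk _ u) ?_
  have := congrArg (Ideal.Quotient.mk (Ideal.span {y})) huv
  rwa [map_add, map_mul, map_mul, Ideal.Quotient.mk_singleton_self, mul_zero, add_zero, map_one,
    mul_comm] at this

section Polynomial

variable {K : Type*} [Field K]

lemma genFib_eq_fibSeq (a b : K[X]) (n : ℕ) : genFib a b n = fibSeq a b n := by
  induction n using Nat.twoStepInduction with
  | zero => rfl
  | one => rfl
  | more n ih₀ ih₁ => rw [genFib, fibSeq_add_two, ih₀, ih₁]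

variable (a b M : K[X])

lemma fibRank_eq_fibSeqRank :
    fibRank a b M =
      fibSeqRank (Ideal.Quotient.mk (Ideal.span {M}) a) (Ideal.Quotient.mk _ b) := by
  simp only [fibRank, fibSeqRank, ← map_fibSeq, ← genFib_eq_fibSeq,
    Ideal.Quotient.eq_zero_iff_dvd]

lemma fibPeriod_eq_fibSeqPeriod :
    fibPeriod a b M =
      fibSeqPeriod (Ideal.Quotient.mk (Ideal.span {M}) a) (Ideal.Quotient.mk _ b) := by
  simp only [fibPeriod, fibSeqPeriod, ← map_fibSeq, ← genFib_eq_fibSeq,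
    Ideal.Quotient.eq_zero_iff_dvd, Ideal.Quotient.eq_one_iff_dvd_sub_one]

lemma finite_quotient_span_singleton [Finite K] {M : K[X]} (hM : M ≠ 0) :
    Finite (K[X] ⧸ Ideal.span {M}) :=
  have := (AdjoinRoot.powerBasis hM).finite
  Module.finite_of_finite K (M := AdjoinRoot M)

end Polynomial

theorem stmt19_general {K : Type*} [Field K] [Fintype K] (a b : K[X])
    (M : K[X]) (hM : 0 < M.natDegree) (hco : IsCoprime b M) :
    (fibPeriod a b M / fibRank a b M) ∣ 2 * polyOrd M (-b) ∧
    (fibPeriod a b M = Nat.lcm (fibRank a b M) (polyOrd M (-b)) ∨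
      fibPeriod a b M = 2 * Nat.lcm (fibRank a b M) (polyOrd M (-b))) := by
  have := finite_quotient_span_singleton (ne_zero_of_natDegree_gt hM)
  have hB := hco.isUnit_quotient_mk
  rw [fibRank_eq_fibSeqRank, fibPeriod_eq_fibSeqPeriod, polyOrd, map_neg]
  exact ⟨fibSeqPeriod_div_fibSeqRank_dvd_two_mul_orderOf hB,
    fibSeqPeriod_eq_lcm_or_eq_two_mul_lcm hB⟩

theorem stmt19 {K : Type*} [Field K] [Fintype K] (a b : K[X]) (hb : b ≠ 0)
    (M : K[X]) (hM : 0 < M.natDegree) (hco : IsCoprime b M) :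
    (fibPeriod a b M / fibRank a b M) ∣ 2 * polyOrd M (-b) ∧
    (fibPeriod a b M = Nat.lcm (fibRank a b M) (polyOrd M (-b)) ∨
      fibPeriod a b M = 2 * Nat.lcm (fibRank a b M) (polyOrd M (-b))) :=
  stmt19_general a b M hM hco
end
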